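/- arXiv:0905.2335 — 4 statements merged into one kernel-verified Lean document; each statement's English description precedes it below -/
import Mathlib

section
/- Let A be a finitely generated commutative Hopf algebra over a field k of characteristic zero, with augmentation ideal 𝔞 (the kernel of the counit ε). Then the module of Kähler differentials Ω_{A/k} is isomorphic as an A-module to A ⊗_k (𝔞/𝔞²); in particular Ω_{A/k} is a free A-module of rank equal to dim_k(𝔞/𝔞²). -/
/-!
Write `a ↦ a₁ ⊗ a₂` for the comultiplication, `S` for the antipode and `π a = [a - ε a]` in
`𝔞/𝔞²`. Then `d a = a₁ ⊗ π a₂` is a derivation `A → A ⊗ 𝔞/𝔞²`, while `ω a = S a₁ · D a₂` satisfies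
`ω (x y) = ε x · ω y + ε y · ω x`, so it kills `𝔞²` and descends to `𝔞/𝔞² → Ω_{A/k}`. By
coassociativity, `a₁ S a₂₁ ⊗ a₂₂ = 1 ⊗ a = S a₁ · a₂₁ ⊗ a₂₂`, which says exactly that the map
`Ω_{A/k} → A ⊗ 𝔞/𝔞²` induced by `d` and the base change `A ⊗ 𝔞/𝔞² → Ω_{A/k}` of `ω` are mutually
inverse. Over a field `𝔞/𝔞²` is free, hence so is `A ⊗ 𝔞/𝔞²`, of the same rank.
-/

open TensorProduct Coalgebra

namespace Coalgebra
variable {k A ι : Type*} [CommSemiring k] [AddCommMonoid A] [Module k A] [Coalgebra k A] {a : A}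

lemma sum_counit_smul_left (r : Repr k a ι) :
    ∑ i ∈ r.index, counit (R := k) (r.right i) • r.left i = a := by
  simpa only [map_sum, _root_.TensorProduct.rid_tmul, one_smul]
    using congr(_root_.TensorProduct.rid k A $(sum_tmul_counit_eq r))

end Coalgebra

namespace Bialgebra

section Semiring
variable {k A ι : Type*} [CommSemiring k] [Semiring A] [Bialgebra k A] {a : A}

lemma sum_algebraMap_counit_tmul (r : Repr k a ι) :
    ∑ i ∈ r.index, algebraMap k A (counit (R := k) (r.left i)) ⊗ₜ[k] r.right i = 1 ⊗ₜ a := by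
  simpa only [map_sum, LinearMap.rTensor_tmul, Algebra.linearMap_apply, map_one]
    using congr((Algebra.linearMap k A).rTensor A $(sum_counit_tmul_eq r))

end Semiring

variable (k A : Type*) [CommRing k] [CommRing A] [Bialgebra k A]

abbrev augmentationIdeal : Ideal A := RingHom.ker (counitAlgHom k A)

abbrev AugmentationCotangent : Type _ :=
  Submodule.restrictScalars k (augmentationIdeal k A) ⧸
    Submodule.comap (Submodule.restrictScalars k (augmentationIdeal k A)).subtype
      (Submodule.restrictScalars k (augmentationIdeal k A * augmentationIdeal k A))

variable {k A}

lemma sub_algebraMap_counit_mem_augmentationIdeal (a : A) :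
    a - algebraMap k A (counit a) ∈ augmentationIdeal k A := by
  simp [RingHom.mem_ker]

variable (k A) in
def augmentationProjection : A →ₗ[k] Submodule.restrictScalars k (augmentationIdeal k A) :=
  LinearMap.codRestrict _ (LinearMap.id - Algebra.linearMap k A ∘ₗ counit)
    sub_algebraMap_counit_mem_augmentationIdeal

lemma coe_augmentationProjection (a : A) :
    (augmentationProjection k A a : A) = a - algebraMap k A (counit a) := rfl

variable (k A) in
def toAugmentationCotangent : A →ₗ[k] AugmentationCotangent k A :=
  Submodule.mkQ _ ∘ₗ augmentationProjection k A

lemma toAugmentationCotangent_surjective :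
    Function.Surjective (toAugmentationCotangent k A) := by
  rintro ⟨⟨x, hx⟩⟩
  have hx : counit (R := k) x = 0 := hx
  exact ⟨x, congrArg Submodule.Quotient.mk
    (Subtype.ext (by rw [coe_augmentationProjection, hx, map_zero, sub_zero]))⟩

lemma toAugmentationCotangent_one : toAugmentationCotangent k A 1 = 0 := by
  have : augmentationProjection k A 1 = 0 := Subtype.ext (by simp [coe_augmentationProjection])
  rw [toAugmentationCotangent, LinearMap.comp_apply, this, map_zero]

lemma toAugmentationCotangent_mul (x y : A) :
    toAugmentationCotangent k A (x * y) =
      counit (R := k) x • toAugmentationCotangent k A y +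
        counit (R := k) y • toAugmentationCotangent k A x := by
  simp only [toAugmentationCotangent, LinearMap.comp_apply, Submodule.mkQ_apply,
    ← Submodule.Quotient.mk_smul, ← Submodule.Quotient.mk_add, Submodule.Quotient.eq,
    Submodule.mem_comap, Submodule.restrictScalars_mem]
  convert Ideal.mul_mem_mul (sub_algebraMap_counit_mem_augmentationIdeal (k := k) x)
    (sub_algebraMap_counit_mem_augmentationIdeal y) using 1
  simp only [Submodule.subtype_apply, Submodule.coe_sub, Submodule.coe_add, Submodule.coe_smul,
    coe_augmentationProjection, Algebra.smul_def, counit_mul, map_mul]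
  ring

end Bialgebra

noncomputable section

namespace HopfAlgebra

section Semiring
variable {k A ι : Type*} [CommSemiring k] [Semiring A] [HopfAlgebra k A] {a : A}

lemma sum_smul_rTensor_antipode_comul (r : Repr k a ι) :
    ∑ i ∈ r.index, r.left i • (antipode k).rTensor A (comul (R := k) (r.right i)) = 1 ⊗ₜ a := by
  -- contract coassociativity `a₁₁ ⊗ a₁₂ ⊗ a₂ = a₁ ⊗ a₂₁ ⊗ a₂₂` along `u ⊗ v ⊗ w ↦ u S v ⊗ w`
  have key := congr(((LinearMap.mul' k A ∘ₗ (antipode k).lTensor A).rTensor A ∘ₗ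
    (TensorProduct.assoc k A A A).symm.toLinearMap)
      $(sum_tmul_tmul_eq r (fun i ↦ ℛ k (r.left i)) (fun i ↦ ℛ k (r.right i))))
  simp only [map_sum, LinearMap.comp_apply, LinearEquiv.coe_coe, assoc_symm_tmul,
    LinearMap.rTensor_tmul, LinearMap.lTensor_tmul, LinearMap.mul'_apply] at key
  simp_rw [← sum_tmul, sum_mul_antipode_eq_algebraMap_counit,
    Bialgebra.sum_algebraMap_counit_tmul] at key
  rw [key]
  refine Finset.sum_congr rfl fun i _ ↦ ?_
  rw [← (ℛ k (r.right i)).eq, map_sum, Finset.smul_sum]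
  simp [smul_tmul']

lemma sum_antipode_smul_comul (r : Repr k a ι) :
    ∑ i ∈ r.index, antipode k (r.left i) • comul (R := k) (r.right i) = 1 ⊗ₜ a := by
  -- contract coassociativity along `u ⊗ v ⊗ w ↦ S u · v ⊗ w`
  have key := congr(((LinearMap.mul' k A ∘ₗ (antipode k).rTensor A).rTensor A ∘ₗ
    (TensorProduct.assoc k A A A).symm.toLinearMap)
      $(sum_tmul_tmul_eq r (fun i ↦ ℛ k (r.left i)) (fun i ↦ ℛ k (r.right i))))
  simp only [map_sum, LinearMap.comp_apply, LinearEquiv.coe_coe, assoc_symm_tmul,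
    LinearMap.rTensor_tmul, LinearMap.mul'_apply] at key
  simp_rw [← sum_tmul, sum_antipode_mul_eq_algebraMap_counit,
    Bialgebra.sum_algebraMap_counit_tmul] at key
  rw [key]
  refine Finset.sum_congr rfl fun i _ ↦ ?_
  rw [← (ℛ k (r.right i)).eq, Finset.smul_sum]
  simp [smul_tmul']

end Semiring

open Bialgebra

variable {k A ι : Type*} [CommRing k] [CommRing A] [HopfAlgebra k A] {a : A}

variable (k A) in
def cotangentDerivation : Derivation k A (A ⊗[k] AugmentationCotangent k A) where
  toLinearMap := ((toAugmentationCotangent k A).baseChange A).restrictScalars k ∘ₗ comul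
  map_one_eq_zero' := by
    simp [Algebra.TensorProduct.one_def, toAugmentationCotangent_one]
  leibniz' x y := by
    let rx := ℛ k x
    let ry := ℛ k y
    change (toAugmentationCotangent k A).baseChange A (comul (x * y)) =
      x • (toAugmentationCotangent k A).baseChange A (comul y) +
        y • (toAugmentationCotangent k A).baseChange A (comul x)
    rw [← (rx.mul ry).eq, ← rx.eq, ← ry.eq]
    simp only [map_sum, Repr.mul_left, Repr.mul_right, Repr.mul_index, Finset.sum_product,
      LinearMap.baseChange_tmul, toAugmentationCotangent_mul, tmul_add,
      Finset.sum_add_distrib, Finset.smul_sum, smul_tmul', tmul_smul]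
    congr 1
    · rw [Finset.sum_comm]
      simp only [← sum_tmul, ← smul_mul_assoc, ← Finset.sum_mul,
        sum_counit_smul_left, smul_eq_mul]
    · simp only [← sum_tmul, ← mul_smul_comm, ← Finset.mul_sum,
        sum_counit_smul_left, smul_eq_mul, mul_comm _ y]

lemma cotangentDerivation_apply (x : A) :
    cotangentDerivation k A x = (toAugmentationCotangent k A).baseChange A (comul x) := rfl

lemma cotangentDerivation_eq_sum (r : Repr k a ι) :
    cotangentDerivation k A a =
      ∑ i ∈ r.index, r.left i ⊗ₜ toAugmentationCotangent k A (r.right i) := by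
  simp [cotangentDerivation_apply, ← r.eq]

variable (k A) in
def invariantDifferential : A →ₗ[k] Ω[A⁄k] :=
  ((KaehlerDifferential.D k A).toLinearMap.liftBaseChange A).restrictScalars k ∘ₗ
    (antipode k).rTensor A ∘ₗ comul

lemma invariantDifferential_eq_sum (r : Repr k a ι) :
    invariantDifferential k A a =
      ∑ i ∈ r.index, antipode k (r.left i) • KaehlerDifferential.D k A (r.right i) := by
  simp [invariantDifferential, ← r.eq]

lemma invariantDifferential_mul (x y : A) :
    invariantDifferential k A (x * y) =
      counit (R := k) x • invariantDifferential k A y +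
        counit (R := k) y • invariantDifferential k A x := by
  let rx := ℛ k x
  let ry := ℛ k y
  rw [invariantDifferential_eq_sum (rx.mul ry), invariantDifferential_eq_sum rx,
    invariantDifferential_eq_sum ry]
  simp only [Repr.mul_left, Repr.mul_right, Repr.mul_index, Finset.sum_product,
    antipode_mul_distrib, Derivation.leibniz, smul_add, smul_smul, Finset.sum_add_distrib]
  congr 1
  · rw [Finset.sum_comm, Finset.smul_sum]
    refine Finset.sum_congr rfl fun p _ ↦ ?_
    simp only [mul_right_comm _ (antipode k (ry.left p))]
    rw [← Finset.sum_smul, ← Finset.sum_mul, sum_antipode_mul_eq_algebraMap_counit, mul_smul,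
      algebraMap_smul]
  · rw [Finset.smul_sum]
    refine Finset.sum_congr rfl fun i _ ↦ ?_
    simp only [mul_rotate (antipode k (rx.left i))]
    rw [← Finset.sum_smul, ← Finset.sum_mul, sum_antipode_mul_eq_algebraMap_counit, mul_smul,
      algebraMap_smul]

lemma invariantDifferential_algebraMap (c : k) :
    invariantDifferential k A (algebraMap k A c) = 0 := by
  have h : invariantDifferential k A 1 = 0 := by
    simp [invariantDifferential, Algebra.TensorProduct.one_def]
  rw [Algebra.algebraMap_eq_smul_one, map_smul, h, smul_zero]

lemma invariantDifferential_eq_zero_of_mem_mul {x : A}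
    (hx : x ∈ augmentationIdeal k A * augmentationIdeal k A) : invariantDifferential k A x = 0 := by
  refine Submodule.mul_induction_on hx (fun u hu v hv ↦ ?_) fun y z hy hz ↦ ?_
  · have hu : counit (R := k) u = 0 := hu
    have hv : counit (R := k) v = 0 := hv
    rw [invariantDifferential_mul, hu, hv, zero_smul, zero_smul, add_zero]
  · rw [map_add, hy, hz, add_zero]

variable (k A) in
def cotangentToKaehler : AugmentationCotangent k A →ₗ[k] Ω[A⁄k] :=
  Submodule.liftQ _ (invariantDifferential k A ∘ₗ Submodule.subtype _)
    fun _ hx ↦ LinearMap.mem_ker.mpr (invariantDifferential_eq_zero_of_mem_mul hx)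

lemma cotangentToKaehler_toAugmentationCotangent (x : A) :
    cotangentToKaehler k A (toAugmentationCotangent k A x) = invariantDifferential k A x := by
  rw [toAugmentationCotangent, LinearMap.comp_apply, cotangentToKaehler, Submodule.mkQ_apply,
    Submodule.liftQ_apply, LinearMap.comp_apply, Submodule.subtype_apply,
    coe_augmentationProjection, map_sub, invariantDifferential_algebraMap, sub_zero]

lemma sum_smul_invariantDifferential (r : Repr k a ι) :
    ∑ i ∈ r.index, r.left i • invariantDifferential k A (r.right i) =
      KaehlerDifferential.D k A a := by
  let L := (KaehlerDifferential.D k A).toLinearMap.liftBaseChange A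
  calc ∑ i ∈ r.index, r.left i • invariantDifferential k A (r.right i)
      = L (∑ i ∈ r.index, r.left i • (antipode k).rTensor A (comul (R := k) (r.right i))) := by
        simp [L, invariantDifferential]
    _ = KaehlerDifferential.D k A a := by
        rw [sum_smul_rTensor_antipode_comul, LinearMap.liftBaseChange_one_tmul]
        rfl

lemma liftKaehlerDifferential_invariantDifferential (x : A) :
    (cotangentDerivation k A).liftKaehlerDifferential (invariantDifferential k A x) =
      1 ⊗ₜ toAugmentationCotangent k A x := by
  let r := ℛ k x
  calc (cotangentDerivation k A).liftKaehlerDifferential (invariantDifferential k A x)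
      = (toAugmentationCotangent k A).baseChange A
          (∑ i ∈ r.index, antipode k (r.left i) • comul (R := k) (r.right i)) := by
        simp [invariantDifferential_eq_sum r, cotangentDerivation_apply]
    _ = 1 ⊗ₜ toAugmentationCotangent k A x := by
        rw [sum_antipode_smul_comul, LinearMap.baseChange_tmul]

variable (k A) in
lemma liftKaehlerDifferential_comp_liftBaseChange :
    (cotangentDerivation k A).liftKaehlerDifferential ∘ₗ
      (cotangentToKaehler k A).liftBaseChange A = LinearMap.id := by
  refine AlgebraTensorModule.curry_injective
    (LinearMap.ext_ring (LinearMap.ext fun q ↦ ?_))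
  obtain ⟨x, rfl⟩ := toAugmentationCotangent_surjective q
  change (cotangentDerivation k A).liftKaehlerDifferential
    ((cotangentToKaehler k A).liftBaseChange A (1 ⊗ₜ toAugmentationCotangent k A x)) = _
  rw [LinearMap.liftBaseChange_one_tmul, cotangentToKaehler_toAugmentationCotangent,
    liftKaehlerDifferential_invariantDifferential]
  rfl

variable (k A) in
lemma liftBaseChange_comp_liftKaehlerDifferential :
    (cotangentToKaehler k A).liftBaseChange A ∘ₗ
      (cotangentDerivation k A).liftKaehlerDifferential = LinearMap.id := by
  refine Derivation.liftKaehlerDifferential_unique _ _ (Derivation.ext fun b ↦ ?_)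
  change (cotangentToKaehler k A).liftBaseChange A
    ((cotangentDerivation k A).liftKaehlerDifferential (KaehlerDifferential.D k A b)) = _
  rw [Derivation.liftKaehlerDifferential_comp_D, cotangentDerivation_eq_sum (ℛ k b), map_sum]
  simp only [LinearMap.liftBaseChange_tmul, cotangentToKaehler_toAugmentationCotangent,
    sum_smul_invariantDifferential]
  rfl

variable (k A) in
def kaehlerDifferentialEquiv : Ω[A⁄k] ≃ₗ[A] A ⊗[k] AugmentationCotangent k A :=
  LinearEquiv.ofLinearMap _ _ (liftKaehlerDifferential_comp_liftBaseChange k A)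
    (liftBaseChange_comp_liftKaehlerDifferential k A)

end HopfAlgebra

end

theorem kaehlerDifferential_iso_tensor_cotangent_general
    (k A : Type*) [Field k] [CommRing A] [HopfAlgebra k A] :
    letI I : Ideal A := RingHom.ker (Bialgebra.counitAlgHom k A)
    letI 𝔞 : Submodule k A := Submodule.restrictScalars k I
    letI Q := 𝔞 ⧸ (Submodule.comap 𝔞.subtype (Submodule.restrictScalars k (I * I)))
    Nonempty ((Ω[A⁄k]) ≃ₗ[A] A ⊗[k] Q) ∧
      Module.Free A (Ω[A⁄k]) ∧ Module.rank A (Ω[A⁄k]) = Module.rank k Q := by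
  have := Bialgebra.nontrivial k (A := A)
  let e := HopfAlgebra.kaehlerDifferentialEquiv k A
  exact ⟨⟨e⟩, .of_equiv e.symm, by rw [e.rank_eq, Module.rank_baseChange, Cardinal.lift_id]⟩

/-- For a finitely generated commutative Hopf algebra `A` over a field `k`
of characteristic zero, with augmentation ideal `𝔞 = ker ε`, the module of Kähler
differentials `Ω_{A/k}` is isomorphic as an `A`-module to `A ⊗_k (𝔞/𝔞²)`; in particular it
is a free `A`-module whose rank equals `dim_k (𝔞/𝔞²)`. -/
theorem kaehlerDifferential_iso_tensor_cotangent
    (k A : Type*) [Field k] [CharZero k] [CommRing A] [HopfAlgebra k A]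
    [Algebra.FiniteType k A] :
    letI I : Ideal A := RingHom.ker (Bialgebra.counitAlgHom k A)
    letI 𝔞 : Submodule k A := Submodule.restrictScalars k I
    letI Q := 𝔞 ⧸ (Submodule.comap 𝔞.subtype (Submodule.restrictScalars k (I * I)))
    Nonempty ((Ω[A⁄k]) ≃ₗ[A] A ⊗[k] Q) ∧
      Module.Free A (Ω[A⁄k]) ∧ Module.rank A (Ω[A⁄k]) = Module.rank k Q :=
  kaehlerDifferential_iso_tensor_cotangent_general k A
end

section
/- Let A be a Hopf algebra with a Hopf algebra projection: ι: B → A a Hopf algebra inclusion and ϖ: A → B a Hopf algebra map with ϖ∘ι = id. Define the coinvariants R = {a ∈ A | (id ⊗ ϖ)∘Δ(a) = a ⊗ 1}. Then R = {Σ a₁ S(ϖ(a₂)) | a ∈ A}, where Δ(a) = Σ a₁ ⊗ a₂ in Sweedler notation and S is the antipode of B (or A). -/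
open TensorProduct

/-!
Work in the convolution algebra of linear maps out of `A`, where `Π = id ⋆ ιSϖ`.
If `a` is coinvariant, then `Π a = a · ιS(1) = a`. Conversely, the coaction `ρ = (id ⊗ ϖ)Δ`
is an algebra map and `ρ ∘ ι = (ι ⊗ id)Δ_B`, so after writing `ρ = (· ⊗ 1) ⋆ (1 ⊗ ϖ ·)`,
showing `ρ ∘ Π = (· ⊗ 1) ∘ Π` comes down to the identity `(1 ⊗ ·) ⋆ (Δ ∘ S) = S(·) ⊗ 1` in `B`.
Both sides of this identity are inverse to `(· ⊗ 1)`: the right side is a left inverse, and the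
left side is a right inverse because `(· ⊗ 1) ⋆ (1 ⊗ ·) = Δ` and `Δ ⋆ (Δ ∘ S) = 1`.
-/

open Coalgebra HopfAlgebra WithConv Algebra.TensorProduct

noncomputable section

section Convolution

variable {R C A B : Type*} [CommSemiring R] [AddCommMonoid C] [Module R C]
  [Semiring A] [Algebra R A] [Semiring B] [Algebra R B]

theorem LinearMap.toConv_algHom_comp_convMul [CoalgebraStruct R C] (h : A →ₐ[R] B)
    (f g : C →ₗ[R] A) :
    toConv (h.toLinearMap ∘ₗ f) * toConv (h.toLinearMap ∘ₗ g) =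
      toConv (h.toLinearMap ∘ₗ (toConv f * toConv g).ofConv) :=
  congrArg toConv (algHom_comp_convMul_distrib h (toConv f) (toConv g)).symm

theorem LinearMap.toConv_comp_coalgHom_convMul [Coalgebra R C] {D : Type*} [AddCommMonoid D]
    [Module R D] [CoalgebraStruct R D] (f g : C →ₗ[R] A) (φ : D →ₗc[R] C) :
    toConv (f ∘ₗ φ.toLinearMap) * toConv (g ∘ₗ φ.toLinearMap) =
      toConv ((toConv f * toConv g).ofConv ∘ₗ φ.toLinearMap) :=
  congrArg toConv (convMul_comp_coalgHom_distrib (toConv f) (toConv g) φ).symm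

theorem TensorProduct.map_comp_comul_eq_convMul [CoalgebraStruct R C] (f : C →ₗ[R] A)
    (g : C →ₗ[R] B) :
    toConv (map f g ∘ₗ comul) =
      toConv ((includeLeft : A →ₐ[R] A ⊗[R] B).toLinearMap ∘ₗ f) *
        toConv ((includeRight : B →ₐ[R] A ⊗[R] B).toLinearMap ∘ₗ g) := by
  have hmul : LinearMap.mul' R (A ⊗[R] B) ∘ₗ
      map (includeLeft : A →ₐ[R] A ⊗[R] B).toLinearMap includeRight.toLinearMap = .id := by
    ext; simp
  rw [LinearMap.convMul_def, map_comp, ← LinearMap.comp_assoc, ← LinearMap.comp_assoc, hmul]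
  rfl

end Convolution

theorem HopfAlgebra.includeRight_convMul_comul_comp_antipode {R B : Type*} [CommSemiring R]
    [Semiring B] [HopfAlgebra R B] :
    toConv (includeRight : B →ₐ[R] B ⊗[R] B).toLinearMap * toConv (comul ∘ₗ antipode R) =
      toConv ((includeLeft : B →ₐ[R] B ⊗[R] B).toLinearMap ∘ₗ antipode R) := by
  have hleft : toConv ((includeLeft : B →ₐ[R] B ⊗[R] B).toLinearMap ∘ₗ antipode R) *
      toConv (includeLeft : B →ₐ[R] B ⊗[R] B).toLinearMap = 1 := by
    have h := LinearMap.toConv_algHom_comp_convMul (includeLeft : B →ₐ[R] B ⊗[R] B)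
      (antipode R) .id
    rwa [LinearMap.comp_id, LinearMap.antipode_mul_id, LinearMap.algHom_comp_convOne] at h
  have hcomul := TensorProduct.map_comp_comul_eq_convMul (R := R) (C := B) .id .id
  rw [TensorProduct.map_id, LinearMap.id_comp, LinearMap.comp_id, LinearMap.comp_id] at hcomul
  refine (left_inv_eq_right_inv hleft ?_).symm
  rw [← mul_assoc, ← hcomul, LinearMap.comul_right_inv]

section Projection

variable {R A B : Type*} [CommSemiring R] [Semiring A] [Semiring B] [Bialgebra R A]
  [HopfAlgebra R B] (ι : B →ₐc[R] A) (ϖ : A →ₐc[R] B)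

def rightCoaction : A →ₐ[R] A ⊗[R] B :=
  (Algebra.TensorProduct.map (AlgHom.id R A) (ϖ : A →ₐ[R] B)).comp (Bialgebra.comulAlgHom R A)

theorem rightCoaction_toLinearMap :
    (rightCoaction ϖ).toLinearMap = map LinearMap.id (ϖ : A →ₗ[R] B) ∘ₗ comul := rfl

def coinvariants : Set A := {a | rightCoaction ϖ a = a ⊗ₜ 1}

def coinvariantsProj : A →ₗ[R] A :=
  (toConv LinearMap.id * toConv ((ι : B →ₗ[R] A) ∘ₗ antipode R ∘ₗ (ϖ : A →ₗ[R] B))).ofConv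

theorem coinvariantsProj_of_mem {a : A} (ha : a ∈ coinvariants ϖ) :
    coinvariantsProj ι ϖ a = a := by
  have hproj : coinvariantsProj ι ϖ a = LinearMap.mul' R A
      (map LinearMap.id ((ι : B →ₗ[R] A) ∘ₗ antipode R) (rightCoaction ϖ a)) := by
    rw [← AlgHom.toLinearMap_apply, rightCoaction_toLinearMap, LinearMap.comp_apply,
      ← LinearMap.comp_apply (map _ _), ← TensorProduct.map_comp]
    rfl
  rw [hproj, ha]
  simp

variable {ι ϖ}

theorem rightCoaction_comp_eq_map_comp_comul (hretract : ∀ b, ϖ (ι b) = b) :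
    (rightCoaction ϖ).toLinearMap ∘ₗ (ι : B →ₗ[R] A) =
      (Algebra.TensorProduct.map (ι : B →ₐ[R] A) (AlgHom.id R B)).toLinearMap ∘ₗ comul := by
  rw [rightCoaction_toLinearMap, LinearMap.comp_assoc, ← CoalgHomClass.map_comp_comul,
    ← LinearMap.comp_assoc]
  congr 1
  ext x y
  simp [hretract]

theorem includeRight_comp_convMul_rightCoaction_comp (hretract : ∀ b, ϖ (ι b) = b) :
    toConv ((includeRight : B →ₐ[R] A ⊗[R] B).toLinearMap ∘ₗ (ϖ : A →ₗ[R] B)) *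
      toConv ((rightCoaction ϖ).toLinearMap ∘ₗ (ι : B →ₗ[R] A) ∘ₗ antipode R ∘ₗ
        (ϖ : A →ₗ[R] B)) =
    toConv ((includeLeft : A →ₐ[R] A ⊗[R] B).toLinearMap ∘ₗ
      (ι : B →ₗ[R] A) ∘ₗ antipode R ∘ₗ (ϖ : A →ₗ[R] B)) := by
  set T := Algebra.TensorProduct.map (ι : B →ₐ[R] A) (AlgHom.id R B)
  have hright : (includeRight : B →ₐ[R] A ⊗[R] B).toLinearMap =
      T.toLinearMap ∘ₗ (includeRight : B →ₐ[R] B ⊗[R] B).toLinearMap := by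
    ext; simp [T]
  have hleft : (includeLeft : A →ₐ[R] A ⊗[R] B).toLinearMap ∘ₗ (ι : B →ₗ[R] A) =
      T.toLinearMap ∘ₗ (includeLeft : B →ₐ[R] B ⊗[R] B).toLinearMap := by
    ext; simp [T]
  rw [← LinearMap.comp_assoc _ (ι : B →ₗ[R] A), rightCoaction_comp_eq_map_comp_comul hretract,
    hright]
  calc _ = toConv (T.toLinearMap ∘ₗ (includeRight : B →ₐ[R] B ⊗[R] B).toLinearMap ∘ₗ
          (ϖ : A →ₗc[R] B).toLinearMap) *
        toConv (T.toLinearMap ∘ₗ (comul ∘ₗ antipode R) ∘ₗ (ϖ : A →ₗc[R] B).toLinearMap) := rfl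
    _ = toConv (T.toLinearMap ∘ₗ (toConv (includeRight : B →ₐ[R] B ⊗[R] B).toLinearMap *
          toConv (comul ∘ₗ antipode R)).ofConv ∘ₗ (ϖ : A →ₗc[R] B).toLinearMap) := by
        rw [LinearMap.toConv_algHom_comp_convMul, LinearMap.toConv_comp_coalgHom_convMul]
    _ = _ := by
        rw [includeRight_convMul_comul_comp_antipode]
        change toConv ((T.toLinearMap ∘ₗ (includeLeft : B →ₐ[R] B ⊗[R] B).toLinearMap) ∘ₗ
          antipode R ∘ₗ (ϖ : A →ₗ[R] B)) = _
        rw [← hleft]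
        rfl

theorem rightCoaction_comp_coinvariantsProj (hretract : ∀ b, ϖ (ι b) = b) :
    (rightCoaction ϖ).toLinearMap ∘ₗ coinvariantsProj ι ϖ =
      (includeLeft : A →ₐ[R] A ⊗[R] B).toLinearMap ∘ₗ coinvariantsProj ι ϖ := by
  apply toConv_injective
  calc toConv ((rightCoaction ϖ).toLinearMap ∘ₗ coinvariantsProj ι ϖ)
      = toConv ((rightCoaction ϖ).toLinearMap ∘ₗ .id) *
          toConv ((rightCoaction ϖ).toLinearMap ∘ₗ (ι : B →ₗ[R] A) ∘ₗ antipode R ∘ₗ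
            (ϖ : A →ₗ[R] B)) :=
        (LinearMap.toConv_algHom_comp_convMul _ _ _).symm
    _ = toConv (includeLeft : A →ₐ[R] A ⊗[R] B).toLinearMap *
          (toConv ((includeRight : B →ₐ[R] A ⊗[R] B).toLinearMap ∘ₗ (ϖ : A →ₗ[R] B)) *
          toConv ((rightCoaction ϖ).toLinearMap ∘ₗ (ι : B →ₗ[R] A) ∘ₗ antipode R ∘ₗ
            (ϖ : A →ₗ[R] B))) := by
        rw [LinearMap.comp_id, rightCoaction_toLinearMap, map_comp_comul_eq_convMul, mul_assoc,
          LinearMap.comp_id]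
    _ = _ := by
        rw [includeRight_comp_convMul_rightCoaction_comp hretract]
        exact LinearMap.toConv_algHom_comp_convMul _ .id _

theorem coinvariantsProj_mem (hretract : ∀ b, ϖ (ι b) = b) (a : A) :
    coinvariantsProj ι ϖ a ∈ coinvariants ϖ :=
  LinearMap.congr_fun (rightCoaction_comp_coinvariantsProj hretract) a

end Projection

end

theorem coinvariants_eq_range_general
    (k A B : Type*) [Field k] [Ring A] [Ring B] [HopfAlgebra k A] [HopfAlgebra k B]
    (ι : B →ₐc[k] A) (ϖ : A →ₐc[k] B)
    (hretract : ∀ b : B, ϖ (ι b) = b) :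
    {a : A | TensorProduct.map (LinearMap.id) (ϖ : A →ₗ[k] B)
        (Coalgebra.comul (R := k) a) = a ⊗ₜ[k] (1 : B)} =
      Set.range (LinearMap.mul' k A ∘ₗ
        TensorProduct.map LinearMap.id
          ((ι : B →ₗ[k] A) ∘ₗ HopfAlgebra.antipode (R := k) ∘ₗ (ϖ : A →ₗ[k] B)) ∘ₗ
        Coalgebra.comul (R := k)) := by
  change coinvariants ϖ = Set.range (coinvariantsProj ι ϖ)
  refine Set.Subset.antisymm (fun a ha => ⟨a, coinvariantsProj_of_mem ι ϖ ha⟩) ?_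
  rintro _ ⟨a, rfl⟩
  exact coinvariantsProj_mem hretract a

/-- Let `A` be a Hopf algebra with a Hopf algebra projection: `ι : B → A`
a Hopf algebra inclusion and `ϖ : A → B` a Hopf algebra map with `ϖ ∘ ι = id`.  The set
of right coinvariants `R = {a ∈ A | (id ⊗ ϖ)Δ(a) = a ⊗ 1}` coincides with the set
`{Σ a₁ S(ϖ(a₂)) | a ∈ A}`. -/
theorem coinvariants_eq_range
    (k A B : Type*) [Field k] [Ring A] [Ring B] [HopfAlgebra k A] [HopfAlgebra k B]
    (ι : B →ₐc[k] A) (ϖ : A →ₐc[k] B) (hinj : Function.Injective ι)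
    (hretract : ∀ b : B, ϖ (ι b) = b) :
    {a : A | TensorProduct.map (LinearMap.id) (ϖ : A →ₗ[k] B)
        (Coalgebra.comul (R := k) a) = a ⊗ₜ[k] (1 : B)} =
      Set.range (LinearMap.mul' k A ∘ₗ
        TensorProduct.map LinearMap.id
          ((ι : B →ₗ[k] A) ∘ₗ HopfAlgebra.antipode (R := k) ∘ₗ (ϖ : A →ₗ[k] B)) ∘ₗ
        Coalgebra.comul (R := k)) :=
  coinvariants_eq_range_general k A B ι ϖ hretract
end

section
/- Let k be a field of characteristic zero, L a finitely generated field extension of k, and x₁,…,xₙ ∈ L elements such that the differentials d(x₁),…,d(xₙ) form an L-basis of the module of Kähler differentials Ω_{L/k}. Then x₁,…,xₙ are algebraically independent over k and the extension k(x₁,…,xₙ) ⊆ L is finite. -/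
/-!
Differentiating a relation `p(x) = 0` gives `∑ᵢ (∂ᵢp)(x) dxᵢ = 0`, so by linear independence of
the `dxᵢ` each `∂ᵢp` is again a relation, of smaller total degree. By induction on the degree all
`∂ᵢp` vanish, which in characteristic zero forces `p` to be a constant, hence `0`.

For finiteness, put `K = k(x)`. The surjection `Ω_{L/k} → Ω_{L/K}` kills every `dxᵢ`, hence is
zero, so `Ω_{L/K} = 0`: the extension `L/K` is formally unramified and essentially of finite type,
hence finite.
-/

open MvPolynomial

theorem Derivation.map_aeval_eq_sum_pderiv {R A M σ : Type*} [CommSemiring R] [CommSemiring A]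
    [Algebra R A] [AddCommMonoid M] [Module A M] [Module R M] [IsScalarTower R A M] [Fintype σ]
    (D : Derivation R A M) (x : σ → A) (p : MvPolynomial σ R) :
    D (aeval x p) = ∑ i, aeval x (pderiv i p) • D (x i) := by
  classical
  induction p using MvPolynomial.induction_on with
  | C a => simp
  | add p q hp hq => simp [hp, hq, add_smul, Finset.sum_add_distrib]
  | mul_X p i hp =>
    simp [hp, pderiv_X, add_smul, Finset.sum_add_distrib, Finset.smul_sum, smul_smul,
      mul_comm, Pi.single_apply, apply_ite, ite_smul, add_comm]

theorem MvPolynomial.eq_C_of_forall_pderiv_eq_zero {R σ : Type*} [CommRing R] [IsAddTorsionFree R]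
    {p : MvPolynomial σ R} (h : ∀ i, pderiv i p = 0) : p = C (constantCoeff p) :=
  coe_injective σ R <| MvPowerSeries.pderiv.ext (fun i => by simp [MvPowerSeries.pderiv_coe, h i])
    (by rw [coe_C, MvPowerSeries.constantCoeff_C]; rfl)

theorem MvPolynomial.totalDegree_pderiv_lt {R σ : Type*} [CommSemiring R] {i : σ}
    {p : MvPolynomial σ R} (h : pderiv i p ≠ 0) :
    (pderiv i p).totalDegree < p.totalDegree := by
  have hsupport : ∀ m ∈ (pderiv i p).support, (m.sum fun _ e => e) < p.totalDegree := by
    intro m hm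
    rw [mem_support_iff, coeff_pderiv] at hm
    have hle := le_totalDegree (mem_support_iff.mpr (left_ne_zero_of_mul hm))
    rw [Finsupp.sum_add_index' (fun _ => rfl) (fun _ _ _ => rfl),
      Finsupp.sum_single_index rfl] at hle
    omega
  obtain ⟨m, hm⟩ := support_nonempty.mpr h
  exact (Finset.sup_lt_iff ((Nat.zero_le _).trans_lt (hsupport m hm))).mpr hsupport

theorem AlgebraicIndependent.of_linearIndependent_derivation {R A M σ : Type*} [CommRing R]
    [IsAddTorsionFree R] [CommRing A] [Algebra R A] [FaithfulSMul R A] [AddCommGroup M]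
    [Module A M] [Module R M] [IsScalarTower R A M] [Fintype σ] (D : Derivation R A M)
    {x : σ → A} (hx : LinearIndependent A fun i => D (x i)) : AlgebraicIndependent R x := by
  rw [algebraicIndependent_iff]
  intro p hp
  induction h : p.totalDegree using Nat.strong_induction_on generalizing p with
  | _ d ih =>
  have hrel : ∀ i, aeval x (pderiv i p) = 0 := Fintype.linearIndependent_iff.mp hx _ <| by
    rw [← D.map_aeval_eq_sum_pderiv, hp, map_zero]
  have hpderiv_zero : ∀ i, pderiv i p = 0 := fun i => by
    by_contra hne
    exact hne (ih _ (h ▸ totalDegree_pderiv_lt hne) _ (hrel i) rfl)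
  have hp_eq := eq_C_of_forall_pderiv_eq_zero hpderiv_zero
  rw [hp_eq, aeval_C, FaithfulSMul.algebraMap_eq_zero_iff] at hp
  rw [hp_eq, hp, map_zero]

theorem KaehlerDifferential.subsingleton_of_span_D_algebraMap {R S A ι : Type*} [CommRing R]
    [CommRing S] [CommRing A] [Algebra R S] [Algebra S A] [Algebra R A] [IsScalarTower R S A]
    (x : ι → S) (hx : Submodule.span A (Set.range fun i => D R A (algebraMap S A (x i))) = ⊤) :
    Subsingleton Ω[A⁄S] := by
  have hzero : map R S A A = 0 := LinearMap.ext_on_range hx fun i => by simp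
  refine ⟨fun ω ω' => ?_⟩
  obtain ⟨ω, rfl⟩ := map_surjective R S A ω
  obtain ⟨ω', rfl⟩ := map_surjective R S A ω'
  simp [hzero]

/-- Let `k` be a field of characteristic zero, `L` a finitely generated
field extension of `k`, and `x₁, …, xₙ ∈ L` elements whose differentials
`d x₁, …, d xₙ` form an `L`-basis of `Ω_{L/k}`.  Then `x₁, …, xₙ` are algebraically
independent over `k` and `k(x₁, …, xₙ) ⊆ L` is a finite extension. -/
theorem algebraicIndependent_and_finite_of_differentials_basis
    (k L : Type*) [Field k] [CharZero k] [Field L] [Algebra k L]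
    (hfg : (⊤ : IntermediateField k L).FG)
    (n : ℕ) (x : Fin n → L)
    (b : Module.Basis (Fin n) L (Ω[L⁄k]))
    (hb : ∀ i, b i = KaehlerDifferential.D k L (x i)) :
    AlgebraicIndependent k x ∧
      FiniteDimensional (↥(IntermediateField.adjoin k (Set.range x))) L := by
  have hb' : ⇑b = fun i => KaehlerDifferential.D k L (x i) := funext hb
  set K := IntermediateField.adjoin k (Set.range x)
  have : Algebra.EssFiniteType k L := IntermediateField.fg_top_iff.mp hfg
  have : Algebra.EssFiniteType K L := .of_comp k K L
  have : Algebra.FormallyUnramified K L :=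
    ⟨KaehlerDifferential.subsingleton_of_span_D_algebraMap (R := k)
      (fun i => ⟨x i, IntermediateField.subset_adjoin k _ ⟨i, rfl⟩⟩) (hb' ▸ b.span_eq)⟩
  exact ⟨.of_linearIndependent_derivation _ (hb' ▸ b.linearIndependent),
    Algebra.FormallyUnramified.finite_of_free K L⟩
end

section
/- Let A be a finitely generated commutative Hopf algebra over a field k of characteristic zero, equipped with a Hopf algebra grading A = ⊕_{i≥0} A(i). Then the largest separable k-subalgebra π₀A of A equals the largest separable k-subalgebra π₀A(0) of A(0); in particular π₀A ⊆ A(0). -/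
open TensorProduct DirectSum

variable (k A : Type*) [Field k] [CommRing A] [HopfAlgebra k A]
  (𝒜 : ℕ → Submodule k A) [GradedAlgebra 𝒜]

/-- The degree-zero component `A(0)` of a graded algebra, as a subalgebra. -/
def gradeZeroSubalgebra : Subalgebra k A :=
  (𝒜 0).toSubalgebra (SetLike.one_mem_graded 𝒜)
    (fun a b ha hb => by simpa using SetLike.mul_mem_graded ha hb)

/-- The largest separable `k`-subalgebra `π₀A` of a commutative `k`-algebra `A`: the sum
of all separable subalgebras. -/
noncomputable def piZero (k A : Type*) [Field k] [CommRing A] [Algebra k A] :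
    Subalgebra k A :=
  sSup {C : Subalgebra k A | Algebra.IsSeparable k ↥C}

/-!
A root `x` of a separable polynomial `p` in an `ℕ`-graded algebra lies in degree zero.
Its degree-zero part `x₀` is again a root, and Taylor expansion of `p` at `x₀`, together with
the invertibility of `p'(x₀)`, gives `r = u * r ^ 2` for `r = x - x₀`. Since `r` has no
component of degree `0`, this equation pushes the lowest nonzero degree of `r` up indefinitely,
so `r = 0`.
-/

namespace Polynomial

theorem Separable.exists_sub_eq_mul_sq {R S : Type*} [CommRing R] [CommRing S] [Algebra R S]
    {p : R[X]} (hp : p.Separable) {x y : S} (hx : aeval x p = 0) (hy : aeval y p = 0) :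
    ∃ u : S, x - y = u * (x - y) ^ 2 := by
  obtain ⟨a, b, hab⟩ := hp
  have hunit : aeval y b * aeval y (derivative p) = 1 := by
    simpa [hy] using congrArg (aeval y) hab
  obtain ⟨c, hc⟩ := binomExpansion (p.map (algebraMap R S)) y (x - y)
  simp only [add_sub_cancel, eval_map_algebraMap, derivative_map, hx, hy] at hc
  exact ⟨-(aeval y b * c), by linear_combination -aeval y b * hc - (x - y) * hunit⟩

end Polynomial

namespace GradedRing

variable {B σ : Type*} [CommRing B] [SetLike σ B] [AddSubgroupClass σ B]
  (ℬ : ℕ → σ) [GradedRing ℬ]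

def VanishesBelow (m : ℕ) (y : B) : Prop :=
  ∀ i < m, (decompose ℬ y i : B) = 0

variable {ℬ}

theorem vanishesBelow_zero (y : B) : VanishesBelow ℬ 0 y :=
  fun _ hi => absurd hi (Nat.not_lt_zero _)

theorem VanishesBelow.mono {m n : ℕ} {y : B} (h : VanishesBelow ℬ n y) (hmn : m ≤ n) :
    VanishesBelow ℬ m y :=
  fun i hi => h i (hi.trans_le hmn)

theorem VanishesBelow.mul {m n : ℕ} {y z : B} (hy : VanishesBelow ℬ m y)
    (hz : VanishesBelow ℬ n z) : VanishesBelow ℬ (m + n) (y * z) := by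
  intro d hd
  rw [decompose_mul, coe_mul_apply_eq_sum_antidiagonal]
  refine Finset.sum_eq_zero fun ij hij => ?_
  rw [Finset.HasAntidiagonal.mem_antidiagonal] at hij
  rcases lt_or_ge ij.1 m with h | h
  · rw [hy _ h, zero_mul]
  · rw [hz _ (by omega), mul_zero]

theorem eq_zero_of_forall_vanishesBelow {y : B} (h : ∀ m, VanishesBelow ℬ m y) : y = 0 :=
  (decompose ℬ).injective <| by
    ext i
    rw [h (i + 1) i i.lt_succ_self, decompose_zero, DirectSum.zero_apply, ZeroMemClass.coe_zero]

theorem eq_zero_of_eq_mul_sq {r u : B} (hr : (decompose ℬ r 0 : B) = 0) (h : r = u * r ^ 2) :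
    r = 0 := by
  have hstep : ∀ m, VanishesBelow ℬ (m + 1) r := by
    intro m
    induction m with
    | zero => exact fun i hi => by rwa [Nat.lt_one_iff.mp hi]
    | succ m ih =>
      rw [h, sq]
      exact ((vanishesBelow_zero u).mul (ih.mul ih)).mono (by omega)
  exact eq_zero_of_forall_vanishesBelow fun m => (hstep m).mono m.le_succ

end GradedRing

namespace GradedAlgebra

variable {R B : Type*} [CommRing R] [CommRing B] [Algebra R B]
  (ℬ : ℕ → Submodule R B) [GradedAlgebra ℬ]

def projZeroAlgHom : B →ₐ[R] B :=
  { GradedRing.projZeroRingHom ℬ with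
    commutes' := fun c => decompose_of_mem_same ℬ (SetLike.algebraMap_mem_graded ℬ c) }

variable {ℬ}

theorem mem_zero_of_separable_of_aeval_eq_zero {p : Polynomial R} (hp : p.Separable) {x : B}
    (hx : Polynomial.aeval x p = 0) : x ∈ ℬ 0 := by
  set x₀ := projZeroAlgHom ℬ x
  have hx₀ : x₀ ∈ ℬ 0 := SetLike.coe_mem _
  have hx₀_root : Polynomial.aeval x₀ p = 0 := by
    rw [Polynomial.aeval_algHom_apply, hx, map_zero]
  obtain ⟨u, hu⟩ := hp.exists_sub_eq_mul_sq hx hx₀_root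
  have hr : (decompose ℬ (x - x₀) 0 : B) = 0 := by
    rw [decompose_sub, DirectSum.sub_apply, AddSubgroupClass.coe_sub,
      decompose_of_mem_same ℬ hx₀]
    exact sub_self x₀
  rw [sub_eq_zero.mp (GradedRing.eq_zero_of_eq_mul_sq hr hu)]
  exact hx₀

end GradedAlgebra

theorem Subalgebra.le_gradeZeroSubalgebra_of_isSeparable {K B : Type*} [Field K] [CommRing B]
    [HopfAlgebra K B] (ℬ : ℕ → Submodule K B) [GradedAlgebra ℬ] (C : Subalgebra K B)
    [Algebra.IsSeparable K ↥C] : C ≤ gradeZeroSubalgebra K B ℬ := fun x hx =>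
  GradedAlgebra.mem_zero_of_separable_of_aeval_eq_zero
    (Algebra.IsSeparable.isSeparable K (⟨x, hx⟩ : C))
    (by simpa using
      Polynomial.aeval_algHom_apply C.val (⟨x, hx⟩ : C) (minpoly K (⟨x, hx⟩ : C)))

theorem piZero_eq_piZero_gradeZero :
    piZero k A =
      sSup {C : Subalgebra k A |
        Algebra.IsSeparable k ↥C ∧ C ≤ gradeZeroSubalgebra k A 𝒜} ∧
    piZero k A ≤ gradeZeroSubalgebra k A 𝒜 := by
  have hle (C : Subalgebra k A) (hC : Algebra.IsSeparable k C) :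
      C ≤ gradeZeroSubalgebra k A 𝒜 :=
    C.le_gradeZeroSubalgebra_of_isSeparable 𝒜
  refine ⟨congrArg sSup (Set.ext fun C => ⟨fun hC => ⟨hC, hle C hC⟩, And.left⟩), ?_⟩
  exact sSup_le hle
end
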